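/- arXiv:1303.1863 — 2 statements merged into one kernel-verified Lean document; each statement's English description precedes it below -/
import Mathlib

section
/- Let $m > 0$, $\lambda > 0$, and $s > 2m$. Set $b(s) = 1 - \frac{2m}{s}$, $f(s) = \sqrt{1 - \frac{2m}{s} + \lambda^2 s^2}$, and $\rho'(s) = \frac{\lambda s}{b(s) f(s)}$. Then $\frac{b(s)\rho'(s)}{\sqrt{b(s)^{-1} - b(s)\rho'(s)^2}} = \lambda s$; consequently the quantities $p_{11} = \frac{d}{ds}\Big(\frac{b\rho'}{\sqrt{b^{-1} - b(\rho')^2}}\Big)$ and $p_{22} = p_{33} = \frac{1}{s}\cdot\frac{b\rho'}{\sqrt{b^{-1} - b(\rho')^2}}$ all equal $\lambda$. -/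
/-!
Writing `x = λs`, the choice of `f` makes `f² = b + x²`, so `bρ' = x / f` and
`b⁻¹ - b ρ'² = (f² - x²) / (b f²) = 1 / f²`. Hence `F = x = λs` on the whole region `s > 2m`,
and both `F'(s)` and `F(s)/s` equal `λ`.
-/

theorem mul_div_sqrt_inv_sub_mul_sq_eq {b : ℝ} (hb : 0 < b) (x : ℝ) :
    b * (x / (b * √(b + x ^ 2))) / √(b⁻¹ - b * (x / (b * √(b + x ^ 2))) ^ 2) = x := by
  have hsum : 0 < b + x ^ 2 := by positivity
  set f := √(b + x ^ 2)
  have hf : 0 < f := Real.sqrt_pos.mpr hsum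
  have hf_sq : f ^ 2 = b + x ^ 2 := Real.sq_sqrt hsum.le
  have hinner : b⁻¹ - b * (x / (b * f)) ^ 2 = (1 / f) ^ 2 := by
    field_simp
    linear_combination hf_sq
  rw [hinner, Real.sqrt_sq (by positivity)]
  field_simp

theorem one_sub_two_mul_div_pos {m s : ℝ} (hm : 0 < m) (hs : 2 * m < s) : 0 < 1 - 2 * m / s := by
  have hs_pos : 0 < s := by linarith
  rw [sub_pos, div_lt_one hs_pos]
  exact hs

theorem umbilical_slice_second_fundamental_form_general (m lam : ℝ)
    (hm : 0 < m)
    (b f r F : ℝ → ℝ)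
    (hb : ∀ s, b s = 1 - 2 * m / s)
    (hf : ∀ s, f s = Real.sqrt (1 - 2 * m / s + lam ^ 2 * s ^ 2))
    (hr : ∀ s, r s = lam * s / (b s * f s))
    (hF : ∀ s, F s = b s * r s / Real.sqrt ((b s)⁻¹ - b s * (r s) ^ 2)) :
    ∀ s, 2 * m < s →
      F s = lam * s ∧ HasDerivAt F lam s ∧ (1 / s) * F s = lam := by
  have hF_eq : ∀ s, 2 * m < s → F s = lam * s := by
    intro s hs
    have hf' : f s = √(b s + (lam * s) ^ 2) := by rw [hf, hb]; ring_nf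
    rw [hF, hr, hf']
    exact mul_div_sqrt_inv_sub_mul_sq_eq (hb s ▸ one_sub_two_mul_div_pos hm hs) _
  intro s hs
  have hs_ne : s ≠ 0 := by linarith
  have hF_nhds : F =ᶠ[nhds s] fun x => lam * x :=
    (eventually_gt_nhds hs).mono fun x hx => hF_eq x hx
  refine ⟨hF_eq s hs, ?_, ?_⟩
  · exact ((hasDerivAt_id s).const_mul lam).congr_of_eventuallyEq hF_nhds |>.congr_deriv (mul_one lam)
  · rw [hF_eq s hs]
    field_simp

/-- with `b(s) = 1 - 2m/s`, `f(s) = √(1 - 2m/s + λ²s²)` and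
`ρ'(s) = λs/(b(s)f(s))`, the quantity `F(s) = bρ'/√(b⁻¹ - b(ρ')²)` equals
`λs` for `s > 2m`; consequently `p₁₁ = F'(s) = λ` and
`p₂₂ = p₃₃ = F(s)/s = λ`, i.e. the slice is totally umbilical. -/
theorem umbilical_slice_second_fundamental_form (m lam : ℝ)
    (hm : 0 < m) (hlam : 0 < lam)
    (b f r F : ℝ → ℝ)
    (hb : ∀ s, b s = 1 - 2 * m / s)
    (hf : ∀ s, f s = Real.sqrt (1 - 2 * m / s + lam ^ 2 * s ^ 2))
    (hr : ∀ s, r s = lam * s / (b s * f s))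
    (hF : ∀ s, F s = b s * r s / Real.sqrt ((b s)⁻¹ - b s * (r s) ^ 2)) :
    ∀ s, 2 * m < s →
      F s = lam * s ∧ HasDerivAt F lam s ∧ (1 / s) * F s = lam :=
  umbilical_slice_second_fundamental_form_general m lam hm b f r F hb hf hr hF
end

section
/- Let $G$ be a symmetric positive definite $n \times n$ real matrix, let $w \in \mathbb{R}^n$, let $c > 0$, and set $\hat{G} = G + c\, w w^T$. Let $h$ be a symmetric $n \times n$ real matrix and $\kappa \in \mathbb{R}$ such that $h - \kappa \hat{G}$ is positive semidefinite. Then $\operatorname{tr}(G^{-1} h) - c\,\kappa\, w^T G^{-1} w \;\geq\; \operatorname{tr}(\hat{G}^{-1} h)$. -/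
/-!
By the Sherman–Morrison formula, `Ĝ⁻¹ = G⁻¹ - c / (1 + c d) • v vᵀ` with `v = G⁻¹ w` and
`d = wᵀ G⁻¹ w ≥ 0`, so `tr (Ĝ⁻¹ h) = tr (G⁻¹ h) - c / (1 + c d) · vᵀ h v`. Since `Ĝ v = (1 + c d) w`,
testing `h - κ Ĝ ≥ 0` on `v` gives `vᵀ h v ≥ κ d (1 + c d)`, which is exactly the claim.
-/

open Matrix

namespace Matrix

variable {ι : Type*} [Fintype ι]

theorem trace_vecMulVec_mul {R : Type*} [CommSemiring R] (a b : ι → R) (M : Matrix ι ι R) :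
    (vecMulVec a b * M).trace = b ⬝ᵥ M *ᵥ a := by
  rw [vecMulVec_mul, trace_vecMulVec, dotProduct_comm, dotProduct_mulVec]

theorem PosSemidef.smul_dotProduct_mulVec_le {R : Type*} [CommRing R] [PartialOrder R]
    [IsOrderedRing R] [StarRing R] {A B : Matrix ι ι R} {κ : R} (hAB : (A - κ • B).PosSemidef)
    (v : ι → R) : κ * (star v ⬝ᵥ B *ᵥ v) ≤ star v ⬝ᵥ A *ᵥ v := by
  have := hAB.dotProduct_mulVec_nonneg v
  rwa [sub_mulVec, dotProduct_sub, smul_mulVec, dotProduct_smul, smul_eq_mul, sub_nonneg] at this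

variable [DecidableEq ι] {K : Type*} [Field K]

theorem inv_add_smul_vecMulVec {A : Matrix ι ι K} (hA : IsUnit A.det) (u v : ι → K) {c : K}
    (hden : 1 + c * (v ⬝ᵥ A⁻¹ *ᵥ u) ≠ 0) :
    (A + c • vecMulVec u v)⁻¹ =
      A⁻¹ - (c / (1 + c * (v ⬝ᵥ A⁻¹ *ᵥ u))) • vecMulVec (A⁻¹ *ᵥ u) (v ᵥ* A⁻¹) := by
  set s := c / (1 + c * (v ⬝ᵥ A⁻¹ *ᵥ u))
  have hs : c - s * (1 + c * (v ⬝ᵥ A⁻¹ *ᵥ u)) = 0 := by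
    simp only [s, div_mul_cancel₀ c hden, sub_self]
  apply inv_eq_right_inv
  rw [add_mul, mul_sub, mul_sub, Matrix.mul_smul, Matrix.mul_smul, Matrix.smul_mul,
    Matrix.smul_mul, mul_nonsing_inv A hA, mul_vecMulVec, mulVec_mulVec, mul_nonsing_inv A hA,
    one_mulVec, vecMulVec_mul, vecMulVec_mul_vecMulVec, vecMulVec_smul]
  calc _ = 1 + (c - s * (1 + c * (v ⬝ᵥ A⁻¹ *ᵥ u))) • vecMulVec u (v ᵥ* A⁻¹) := by module
    _ = 1 := by rw [hs, zero_smul, add_zero]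

theorem IsSymm.inv_add_smul_vecMulVec_self {A : Matrix ι ι K} (hA_symm : A.IsSymm)
    (hA : IsUnit A.det) (w : ι → K) {c : K} (hden : 1 + c * (w ⬝ᵥ A⁻¹ *ᵥ w) ≠ 0) :
    (A + c • vecMulVec w w)⁻¹ =
      A⁻¹ - (c / (1 + c * (w ⬝ᵥ A⁻¹ *ᵥ w))) • vecMulVec (A⁻¹ *ᵥ w) (A⁻¹ *ᵥ w) := by
  rw [inv_add_smul_vecMulVec hA w w hden, ← mulVec_transpose, hA_symm.inv.eq]

end Matrix

theorem mean_curvature_comparison_general {n : ℕ}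
    (G : Matrix (Fin n) (Fin n) ℝ) (hG : G.PosDef)
    (w : Fin n → ℝ) (c : ℝ) (hc : 0 < c)
    (h : Matrix (Fin n) (Fin n) ℝ) (κ : ℝ)
    (hpsd : (h - κ • (G + c • Matrix.vecMulVec w w)).PosSemidef) :
    (G⁻¹ * h).trace - c * κ * (w ⬝ᵥ (G⁻¹ *ᵥ w)) ≥
      ((G + c • Matrix.vecMulVec w w)⁻¹ * h).trace := by
  set v := G⁻¹ *ᵥ w
  set d := w ⬝ᵥ v
  have hd : 0 ≤ d := by simpa using hG.inv.posSemidef.dotProduct_mulVec_nonneg w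
  have hden : 0 < 1 + c * d := by positivity
  have hGhat_v : (G + c • vecMulVec w w) *ᵥ v = (1 + c * d) • w := by
    rw [add_mulVec, smul_mulVec, vecMulVec_mulVec, mulVec_mulVec,
      mul_nonsing_inv G hG.det_pos.ne'.isUnit, one_mulVec, op_smul_eq_smul]
    module
  have hquad : κ * ((1 + c * d) * d) ≤ v ⬝ᵥ h *ᵥ v := by
    simpa [hGhat_v, dotProduct_comm v w, mul_assoc] using hpsd.smul_dotProduct_mulVec_le v
  rw [(isHermitian_iff_isSymm.mp hG.isHermitian).inv_add_smul_vecMulVec_self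
      hG.det_pos.ne'.isUnit w hden.ne', sub_mul, trace_sub, Matrix.smul_mul, trace_smul,
    trace_vecMulVec_mul, smul_eq_mul, ge_iff_le, sub_le_sub_iff_left, div_mul_eq_mul_div,
    le_div_iff₀ hden]
  calc c * κ * d * (1 + c * d) = c * (κ * ((1 + c * d) * d)) := by ring
    _ ≤ c * (v ⬝ᵥ h *ᵥ v) := mul_le_mul_of_nonneg_left hquad hc.le

/-- the key pointwise mean curvature comparison: if
`Ĝ = G + c w wᵀ` with `G` symmetric positive definite and `c > 0`, and if
`h - κ Ĝ` is positive semidefinite for a symmetric matrix `h`, then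
`tr(G⁻¹h) - c κ wᵀG⁻¹w ≥ tr(Ĝ⁻¹h)`. -/
theorem mean_curvature_comparison {n : ℕ}
    (G : Matrix (Fin n) (Fin n) ℝ) (hG : G.PosDef)
    (w : Fin n → ℝ) (c : ℝ) (hc : 0 < c)
    (h : Matrix (Fin n) (Fin n) ℝ) (hh : h.IsSymm) (κ : ℝ)
    (hpsd : (h - κ • (G + c • Matrix.vecMulVec w w)).PosSemidef) :
    (G⁻¹ * h).trace - c * κ * (w ⬝ᵥ (G⁻¹ *ᵥ w)) ≥
      ((G + c • Matrix.vecMulVec w w)⁻¹ * h).trace :=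
  mean_curvature_comparison_general G hG w c hc h κ hpsd
end
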